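/- (Injectivity with quantitative lower bound) If the kernel is admissible, i.e., Σ_{j=0}^J |γ_j(r)|² = 1 for all r and β = min_{1≤r≤k} |γ_0(r)|² > 0, then for all f, f' ∈ L²(G): ‖S[P_J]f − S[P_J]f'‖²_{2,J} ≥ ‖φ ∗ (f − f')‖² ≥ β‖f − f'‖². In particular the scattering transform is injective. -/

import Mathlib

open scoped BigOperators
open MeasureTheory

noncomputable def conv {G : Type*} [Group G] [Fintype G] (f g : G → ℂ) : G → ℂ :=
  fun x => (Fintype.card G : ℂ)⁻¹ * ∑ y, f y * g (y⁻¹ * x)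

noncomputable def nsq {G : Type*} [Fintype G] (f : G → ℂ) : ℝ :=
  (Fintype.card G : ℝ)⁻¹ * ∑ x, Complex.normSq (f x)

noncomputable def ip {G : Type*} [Fintype G] (f g : G → ℂ) : ℂ :=
  (Fintype.card G : ℂ)⁻¹ * ∑ x, f x * (starRingEnd ℂ) (g x)

noncomputable def gwavelet {G : Type*} [Group G] {k : ℕ} (d : Fin k → ℕ)
    (π : (r : Fin k) → G →* Matrix (Fin (d r)) (Fin (d r)) ℂ)
    (γ : Fin k → ℂ) : G → ℂ :=
  fun x => ∑ r, (d r : ℂ) * γ r * Matrix.trace (π r x)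

noncomputable def Upath {G : Type*} [Group G] [Fintype G] {J : ℕ}
    (ψ : Fin J → G → ℂ) : List (Fin J) → (G → ℂ) → G → ℂ
  | [], f => f
  | j :: p, f => Upath ψ p fun x => ((‖conv (ψ j) f x‖ : ℝ) : ℂ)

noncomputable def Sop {G : Type*} [Group G] [Fintype G] {k J : ℕ} (d : Fin k → ℕ)
    (π : (r : Fin k) → G →* Matrix (Fin (d r)) (Fin (d r)) ℂ)
    (γ : Fin (J + 1) → Fin k → ℂ) (p : List (Fin J)) (f : G → ℂ) : G → ℂ :=
  conv (gwavelet d π (γ 0)) (Upath (fun j => gwavelet d π (γ j.succ)) p f)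

/-! The matrix coefficients of the `π_r` satisfy Schur's orthogonality relations. Since there are
as many `π_r` as conjugacy classes, the characters span the class functions, and expanding the
indicator of `1` gives `∑ r, d_r χ_r = |G| δ₁`; this yields Fourier inversion and Plancherel on `G`.
Convolution with `gwavelet d π c` multiplies `ĥ(π_r)` by `c r`, so admissibility
`∑ j, |γ_j r|² = 1` makes `φ, ψ_1, …, ψ_J` a Parseval frame, and `β ≤ |γ_0 r|²` gives
`‖φ ∗ h‖² ≥ β ‖h‖²`.

The modulus is non-expansive, so for every path `p` the frame bound gives
`‖φ ∗ (U[p]f - U[p]f')‖² + ∑ j, ‖U[p ++ [j]]f - U[p ++ [j]]f'‖² ≤ ‖U[p]f - U[p]f'‖²`.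
Summed over paths of length `m` this telescopes: the scattering energies of all orders add up to at
most `‖f - f'‖²`, so the series converges and dominates its `m = 0` term `‖φ ∗ (f - f')‖²`. -/

open Matrix ComplexConjugate

section Schur

variable {G : Type*} [Group G] {m n : Type*} [Fintype m] [DecidableEq m]
  [Fintype n] [DecidableEq n]

theorem map_inv_eq_star_of_mem_unitaryGroup {ρ : G →* Matrix n n ℂ}
    (hρ : ∀ x, ρ x ∈ unitaryGroup n ℂ) (x : G) : ρ x⁻¹ = star (ρ x) :=
  left_inv_eq_right_inv (by rw [← map_mul, inv_mul_cancel, map_one])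
    (Unitary.mul_star_self_of_mem (hρ x))

theorem trace_map_mul_inv {ρ : G →* Matrix n n ℂ} (hρ : ∀ x, ρ x ∈ unitaryGroup n ℂ)
    (x y : G) : (ρ (x * y⁻¹)).trace = ∑ i, ∑ j, ρ x i j * conj (ρ y i j) := by
  simp [map_mul, map_inv_eq_star_of_mem_unitaryGroup hρ, Matrix.trace, Matrix.mul_apply,
    Matrix.star_apply]

theorem trace_map_eq_of_isConj (ρ : G →* Matrix n n ℂ) {x y : G} (h : IsConj x y) :
    (ρ x).trace = (ρ y).trace := by
  obtain ⟨c, rfl⟩ := isConj_iff.mp h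
  rw [map_mul, map_mul, Matrix.trace_mul_cycle, ← map_mul, inv_mul_cancel, map_one,
    Matrix.one_mul]

variable [Fintype G]

theorem mul_sum_mul_mul_map_inv (ρ : G →* Matrix m m ℂ) (σ : G →* Matrix n n ℂ)
    (E : Matrix m n ℂ) (y : G) :
    ρ y * ∑ x, ρ x * E * σ x⁻¹ = (∑ x, ρ x * E * σ x⁻¹) * σ y := by
  rw [Matrix.mul_sum, Matrix.sum_mul]
  refine Fintype.sum_equiv (Equiv.mulLeft y) _ _ fun x => ?_
  simp only [Equiv.coe_mulLeft, _root_.mul_inv_rev, map_mul, Matrix.mul_assoc]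
  rw [← map_mul σ y⁻¹, inv_mul_cancel, map_one, Matrix.mul_one]

theorem sum_mul_single_mul_map_inv_apply (ρ : G →* Matrix m m ℂ) {σ : G →* Matrix n n ℂ}
    (hσ : ∀ x, σ x ∈ unitaryGroup n ℂ) (i j : m) (k l : n) :
    (∑ x, ρ x * single j l (1 : ℂ) * σ x⁻¹) i k = ∑ x, ρ x i j * conj (σ x k l) := by
  simp [Matrix.sum_apply, map_inv_eq_star_of_mem_unitaryGroup hσ, Matrix.mul_apply,
    Matrix.single_apply, ite_and, Matrix.star_apply]

theorem schur_orthogonality_of_intertwiner_eq_zero {ρ : G →* Matrix m m ℂ}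
    {σ : G →* Matrix n n ℂ} (hσ : ∀ x, σ x ∈ unitaryGroup n ℂ)
    (hρσ : ∀ T : Matrix m n ℂ, (∀ x, ρ x * T = T * σ x) → T = 0) (i j : m) (k l : n) :
    ∑ x, ρ x i j * conj (σ x k l) = 0 := by
  rw [← sum_mul_single_mul_map_inv_apply ρ hσ, hρσ _ (mul_sum_mul_mul_map_inv ρ σ _)]
  rfl

theorem schur_orthogonality_of_commutant_scalar {ρ : G →* Matrix n n ℂ}
    (hρ : ∀ x, ρ x ∈ unitaryGroup n ℂ)
    (hirr : ∀ M : Matrix n n ℂ, (∀ x, M * ρ x = ρ x * M) → ∃ c : ℂ, M = c • 1) (i j k l : n) :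
    ∑ x, ρ x i j * conj (ρ x k l)
      = if i = k ∧ j = l then (Fintype.card G : ℂ) / Fintype.card n else 0 := by
  set T := ∑ x, ρ x * single j l (1 : ℂ) * ρ x⁻¹
  obtain ⟨c, hc⟩ := hirr T fun x => (mul_sum_mul_mul_map_inv ρ ρ _ x).symm
  have htrace : c * Fintype.card n = Fintype.card G * if j = l then 1 else 0 := by
    have : T.trace = Fintype.card G * (single j l (1 : ℂ)).trace := by
      simp [T, Matrix.trace_sum, Matrix.trace_mul_cycle, ← map_mul]
    rw [hc, Matrix.trace_smul, Matrix.trace_one, smul_eq_mul] at this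
    rw [this]
    split_ifs with h <;> simp [h]
  have : Nonempty n := ⟨i⟩
  have hn : (Fintype.card n : ℂ) ≠ 0 := Nat.cast_ne_zero.mpr Fintype.card_ne_zero
  rw [← sum_mul_single_mul_map_inv_apply ρ hρ]
  change T i k = _
  rw [hc, Matrix.smul_apply, Matrix.one_apply, eq_div_of_mul_eq hn htrace]
  split_ifs <;> simp_all

theorem sum_trace_mul_conj_of_intertwiner_eq_zero {ρ : G →* Matrix m m ℂ}
    {σ : G →* Matrix n n ℂ} (hσ : ∀ x, σ x ∈ unitaryGroup n ℂ)
    (hρσ : ∀ T : Matrix m n ℂ, (∀ x, ρ x * T = T * σ x) → T = 0) (k l : n) :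
    ∑ x, (ρ x).trace * conj (σ x k l) = 0 := by
  simp only [Matrix.trace, Matrix.diag, Finset.sum_mul]
  rw [Finset.sum_comm]
  exact Finset.sum_eq_zero fun t _ => schur_orthogonality_of_intertwiner_eq_zero hσ hρσ t t k l

theorem sum_trace_mul_conj_of_commutant_scalar {ρ : G →* Matrix n n ℂ}
    (hρ : ∀ x, ρ x ∈ unitaryGroup n ℂ)
    (hirr : ∀ M : Matrix n n ℂ, (∀ x, M * ρ x = ρ x * M) → ∃ c : ℂ, M = c • 1) (k l : n) :
    ∑ x, (ρ x).trace * conj (ρ x k l)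
      = if k = l then (Fintype.card G : ℂ) / Fintype.card n else 0 := by
  simp only [Matrix.trace, Matrix.diag, Finset.sum_mul]
  rw [Finset.sum_comm]
  simp_rw [schur_orthogonality_of_commutant_scalar hρ hirr]
  split_ifs with h
  · subst h; simp
  · exact Finset.sum_eq_zero fun t _ => if_neg fun ht => h (ht.1.symm.trans ht.2)

end Schur

structure IsCompleteIrrepSystem {G : Type*} [Group G] {k : ℕ} (d : Fin k → ℕ)
    (π : (r : Fin k) → G →* Matrix (Fin (d r)) (Fin (d r)) ℂ) : Prop where
  dim_pos : ∀ r, 0 < d r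
  unitary : ∀ r x, π r x ∈ unitaryGroup (Fin (d r)) ℂ
  commutant_scalar : ∀ (r : Fin k) (M : Matrix (Fin (d r)) (Fin (d r)) ℂ),
    (∀ x, M * π r x = π r x * M) → ∃ c : ℂ, M = c • 1
  intertwiner_eq_zero : ∀ (r s : Fin k), r ≠ s → ∀ T : Matrix (Fin (d r)) (Fin (d s)) ℂ,
    (∀ x, π r x * T = T * π s x) → T = 0
  card_conjClasses : Nat.card (ConjClasses G) = k

namespace IsCompleteIrrepSystem

variable {G : Type*} [Group G] [Fintype G] {k : ℕ} {d : Fin k → ℕ}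
  {π : (r : Fin k) → G →* Matrix (Fin (d r)) (Fin (d r)) ℂ}

theorem sum_sum_mul_trace_mul_conj (hπ : IsCompleteIrrepSystem d π) (a : Fin k → ℂ) (s : Fin k)
    (i j : Fin (d s)) :
    ∑ x, (∑ r, a r * (π r x).trace) * conj (π s x i j)
      = if i = j then a s * Fintype.card G / d s else 0 := by
  simp only [Finset.sum_mul, mul_assoc]
  rw [Finset.sum_comm]
  simp only [← Finset.mul_sum]
  rw [Finset.sum_eq_single s (fun r _ hrs => by
    rw [sum_trace_mul_conj_of_intertwiner_eq_zero (hπ.unitary s) (hπ.intertwiner_eq_zero r s hrs),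
      mul_zero]) (by simp),
    sum_trace_mul_conj_of_commutant_scalar (hπ.unitary s) (hπ.commutant_scalar s),
    Fintype.card_fin]
  split_ifs <;> ring

theorem sum_sum_mul_trace_mul_conj_trace (hπ : IsCompleteIrrepSystem d π) (a : Fin k → ℂ)
    (s : Fin k) :
    ∑ x, (∑ r, a r * (π r x).trace) * conj (π s x).trace = a s * Fintype.card G := by
  have : (d s : ℂ) ≠ 0 := Nat.cast_ne_zero.mpr (hπ.dim_pos s).ne'
  have htrace : ∀ x, conj (π s x).trace = ∑ m, conj (π s x m m) := fun x => by
    rw [Matrix.trace, map_sum]; rfl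
  simp only [htrace, Finset.mul_sum]
  rw [Finset.sum_comm]
  simp only [hπ.sum_sum_mul_trace_mul_conj, if_pos, Finset.sum_const, Finset.card_univ,
    Fintype.card_fin, nsmul_eq_mul]
  field_simp

theorem exists_sum_mul_trace_eq (hπ : IsCompleteIrrepSystem d π) (F : G → ℂ)
    (hF : ∀ x y, IsConj x y → F x = F y) :
    ∃ a : Fin k → ℂ, ∀ x, ∑ r, a r * (π r x).trace = F x := by
  classical
  -- Orthogonality makes the `k` characters independent in the `k`-dimensional space of class
  -- functions, so they span it.
  let χ : Fin k → ConjClasses G → ℂ := fun r =>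
    Quotient.lift (fun x => (π r x).trace) fun _ _ => trace_map_eq_of_isConj (π r)
  have hχ : ∀ r x, χ r (ConjClasses.mk x) = (π r x).trace := fun _ _ => rfl
  have hli : LinearIndependent ℂ χ := by
    refine Fintype.linearIndependent_iff.mpr fun g hg s => ?_
    have hzero : ∀ x, ∑ r, g r * (π r x).trace = 0 := fun x => by
      simpa [Finset.sum_apply, hχ] using congrFun hg (ConjClasses.mk x)
    have := hπ.sum_sum_mul_trace_mul_conj_trace g s
    simp only [hzero, zero_mul, Finset.sum_const_zero] at this
    exact (mul_eq_zero.mp this.symm).resolve_right (Nat.cast_ne_zero.mpr Fintype.card_ne_zero)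
  have : Nonempty (Fin k) := ⟨⟨0, hπ.card_conjClasses ▸ Nat.card_pos⟩⟩
  have hspan := hli.span_eq_top_of_card_eq_finrank (by
    rw [Fintype.card_fin, Module.finrank_fintype_fun_eq_card, ← Nat.card_eq_fintype_card,
      hπ.card_conjClasses])
  let F' : ConjClasses G → ℂ := Quotient.lift F hF
  obtain ⟨a, ha⟩ := (Submodule.mem_span_range_iff_exists_fun ℂ).mp
    (hspan ▸ Submodule.mem_top : F' ∈ Submodule.span ℂ (Set.range χ))
  have hF' : ∀ x, F' (ConjClasses.mk x) = F x := fun _ => rfl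
  exact ⟨a, fun x => by simpa [Finset.sum_apply, hχ, hF'] using congrFun ha (ConjClasses.mk x)⟩

theorem sum_dim_mul_trace [DecidableEq G] (hπ : IsCompleteIrrepSystem d π) (x : G) :
    ∑ r, (d r : ℂ) * (π r x).trace = if x = 1 then (Fintype.card G : ℂ) else 0 := by
  obtain ⟨a, ha⟩ := hπ.exists_sum_mul_trace_eq (fun x => if x = 1 then 1 else 0) fun x y h => by
    have : x = 1 ↔ y = 1 :=
      ⟨fun hx => isConj_one_right.mp (hx ▸ h), fun hy => isConj_one_left.mp (hy ▸ h)⟩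
    simp only [this]
  have hN : (Fintype.card G : ℂ) ≠ 0 := Nat.cast_ne_zero.mpr Fintype.card_ne_zero
  have hcoeff : ∀ s, a s = d s / Fintype.card G := fun s => by
    have := hπ.sum_sum_mul_trace_mul_conj_trace a s
    simp only [ha, ite_mul, one_mul, zero_mul, Finset.sum_ite_eq', Finset.mem_univ, if_true,
      map_one, Matrix.trace_one, Fintype.card_fin, map_natCast] at this
    rw [eq_div_iff hN, ← this]
  calc ∑ r, (d r : ℂ) * (π r x).trace = Fintype.card G * ∑ r, a r * (π r x).trace := by
        simp only [hcoeff, Finset.mul_sum]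
        exact Finset.sum_congr rfl fun r _ => by field_simp
    _ = _ := by rw [ha]; split_ifs <;> simp

end IsCompleteIrrepSystem

section Fourier

variable {G : Type*} [Group G] [Fintype G] {k : ℕ} {d : Fin k → ℕ}
  {π : (r : Fin k) → G →* Matrix (Fin (d r)) (Fin (d r)) ℂ}

/- `groupFourierCoeff π h r i j` is the `(j, i)` entry of `ĥ(π_r) = ∑ x, h x • (π r x)ᴴ`; it is
not normalised by `1 / |G|`, which is why the Plancherel weights below are `d_r / |G|²`. -/
variable (π) in
noncomputable def groupFourierCoeff (h : G → ℂ) (r : Fin k) (i j : Fin (d r)) : ℂ :=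
  ∑ x, conj (π r x i j) * h x

variable (π) in
noncomputable def groupFourierNormSq (h : G → ℂ) (r : Fin k) : ℝ :=
  ∑ i, ∑ j, Complex.normSq (groupFourierCoeff π h r i j)

theorem groupFourierCoeff_conv (K h : G → ℂ) (r : Fin k) (i j : Fin (d r)) :
    groupFourierCoeff π (conv K h) r i j
      = (Fintype.card G : ℂ)⁻¹
          * ∑ m, groupFourierCoeff π K r i m * groupFourierCoeff π h r m j := by
  have hshift : ∀ y, ∑ x, conj (π r x i j) * h (y⁻¹ * x)
      = ∑ m, conj (π r y i m) * groupFourierCoeff π h r m j := fun y => by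
    rw [← Equiv.sum_comp (Equiv.mulLeft y)]
    simp only [groupFourierCoeff, Equiv.coe_mulLeft, inv_mul_cancel_left, map_mul,
      Matrix.mul_apply, map_sum, Finset.sum_mul, Finset.mul_sum]
    rw [Finset.sum_comm]
    exact Finset.sum_congr rfl fun _ _ => Finset.sum_congr rfl fun _ _ => by ring
  calc groupFourierCoeff π (conv K h) r i j
      = (Fintype.card G : ℂ)⁻¹ * ∑ y, K y * ∑ x, conj (π r x i j) * h (y⁻¹ * x) := by
        simp only [groupFourierCoeff, conv, Finset.mul_sum]
        rw [Finset.sum_comm]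
        exact Finset.sum_congr rfl fun _ _ => Finset.sum_congr rfl fun _ _ => by ring
    _ = _ := by
        simp only [hshift, Finset.mul_sum]
        rw [Finset.sum_comm]
        refine Finset.sum_congr rfl fun m _ => ?_
        rw [show groupFourierCoeff π K r i m = ∑ y, conj (π r y i m) * K y from rfl,
          Finset.sum_mul, Finset.mul_sum]
        exact Finset.sum_congr rfl fun _ _ => by ring

end Fourier

namespace IsCompleteIrrepSystem

variable {G : Type*} [Group G] [Fintype G] {k : ℕ} {d : Fin k → ℕ}
  {π : (r : Fin k) → G →* Matrix (Fin (d r)) (Fin (d r)) ℂ}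

theorem groupFourierCoeff_gwavelet (hπ : IsCompleteIrrepSystem d π) (c : Fin k → ℂ) (r : Fin k)
    (i j : Fin (d r)) :
    groupFourierCoeff π (gwavelet d π c) r i j = if i = j then Fintype.card G * c r else 0 := by
  have hd : (d r : ℂ) ≠ 0 := Nat.cast_ne_zero.mpr (hπ.dim_pos r).ne'
  simp only [groupFourierCoeff, gwavelet, mul_comm (conj _)]
  rw [hπ.sum_sum_mul_trace_mul_conj]
  split_ifs
  · field_simp
  · rfl

theorem groupFourierCoeff_conv_gwavelet (hπ : IsCompleteIrrepSystem d π) (c : Fin k → ℂ)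
    (h : G → ℂ) (r : Fin k) (i j : Fin (d r)) :
    groupFourierCoeff π (conv (gwavelet d π c) h) r i j = c r * groupFourierCoeff π h r i j := by
  have hN : (Fintype.card G : ℂ) ≠ 0 := Nat.cast_ne_zero.mpr Fintype.card_ne_zero
  simp only [groupFourierCoeff_conv, hπ.groupFourierCoeff_gwavelet, ite_mul, zero_mul,
    Finset.sum_ite_eq, Finset.mem_univ, if_true]
  field_simp

theorem groupFourierNormSq_conv_gwavelet (hπ : IsCompleteIrrepSystem d π) (c : Fin k → ℂ)
    (h : G → ℂ) (r : Fin k) :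
    groupFourierNormSq π (conv (gwavelet d π c) h) r
      = Complex.normSq (c r) * groupFourierNormSq π h r := by
  simp only [groupFourierNormSq, hπ.groupFourierCoeff_conv_gwavelet, Complex.normSq_mul,
    Finset.mul_sum]

theorem groupFourier_inversion (hπ : IsCompleteIrrepSystem d π) (h : G → ℂ) (x : G) :
    h x = (Fintype.card G : ℂ)⁻¹
      * ∑ r, (d r : ℂ) * ∑ i, ∑ j, π r x i j * groupFourierCoeff π h r i j := by
  classical
  have hkernel : ∀ y, ∑ r, (d r : ℂ) * ∑ i, ∑ j, π r x i j * conj (π r y i j)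
      = if x = y then (Fintype.card G : ℂ) else 0 := fun y => by
    simp only [← trace_map_mul_inv (hπ.unitary _), hπ.sum_dim_mul_trace, mul_inv_eq_one]
  have hN : (Fintype.card G : ℂ) ≠ 0 := Nat.cast_ne_zero.mpr Fintype.card_ne_zero
  calc h x = ∑ y, (Fintype.card G : ℂ)⁻¹
          * ((if x = y then (Fintype.card G : ℂ) else 0) * h y) := by
        simp [hN]
    _ = ∑ y, ∑ r, ∑ i, ∑ j, (Fintype.card G : ℂ)⁻¹
          * ((d r : ℂ) * (π r x i j * (conj (π r y i j) * h y))) := by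
        simp only [← hkernel, Finset.sum_mul, Finset.mul_sum, mul_assoc]
    _ = _ := by
        simp only [groupFourierCoeff, Finset.mul_sum]
        simp_rw [Finset.sum_comm (α := G)]

theorem sum_normSq_eq_sum_groupFourierNormSq (hπ : IsCompleteIrrepSystem d π) (h : G → ℂ) :
    ∑ x, Complex.normSq (h x)
      = (Fintype.card G : ℝ)⁻¹ * ∑ r, (d r : ℝ) * groupFourierNormSq π h r := by
  have hconj : ∀ r i j, ∑ x, conj (h x) * π r x i j = conj (groupFourierCoeff π h r i j) :=
    fun r i j => by simp [groupFourierCoeff, mul_comm]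
  apply Complex.ofReal_injective
  push_cast
  calc ∑ x, (Complex.normSq (h x) : ℂ) = ∑ x, conj (h x) * h x := by
        simp [Complex.normSq_eq_conj_mul_self]
    _ = ∑ x, conj (h x) * ((Fintype.card G : ℂ)⁻¹
          * ∑ r, (d r : ℂ) * ∑ i, ∑ j, π r x i j * groupFourierCoeff π h r i j) :=
        Finset.sum_congr rfl fun x _ => by rw [← hπ.groupFourier_inversion h x]
    _ = (Fintype.card G : ℂ)⁻¹ * ∑ r, (d r : ℂ) * ∑ i, ∑ j,
          (∑ x, conj (h x) * π r x i j) * groupFourierCoeff π h r i j := by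
        simp only [Finset.mul_sum, Finset.sum_mul]
        simp_rw [Finset.sum_comm (γ := G)]
        refine Finset.sum_congr rfl fun _ _ => Finset.sum_congr rfl fun _ _ =>
          Finset.sum_congr rfl fun _ _ => Finset.sum_congr rfl fun _ _ => by ring
    _ = _ := by
        simp [hconj, groupFourierNormSq, Complex.normSq_eq_conj_mul_self]

theorem nsq_eq_sum_groupFourierNormSq (hπ : IsCompleteIrrepSystem d π) (h : G → ℂ) :
    nsq h = ∑ r, (d r / (Fintype.card G : ℝ) ^ 2) * groupFourierNormSq π h r := by
  rw [nsq, hπ.sum_normSq_eq_sum_groupFourierNormSq, ← mul_assoc, Finset.mul_sum]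
  exact Finset.sum_congr rfl fun _ _ => by ring

theorem sum_nsq_conv_gwavelet (hπ : IsCompleteIrrepSystem d π) {ι : Type*} [Fintype ι]
    (γ : ι → Fin k → ℂ) (hγ : ∀ r, ∑ j, Complex.normSq (γ j r) = 1) (h : G → ℂ) :
    ∑ j, nsq (conv (gwavelet d π (γ j)) h) = nsq h := by
  simp only [hπ.nsq_eq_sum_groupFourierNormSq, hπ.groupFourierNormSq_conv_gwavelet]
  rw [Finset.sum_comm]
  refine Finset.sum_congr rfl fun r _ => ?_
  rw [← Finset.mul_sum, ← Finset.sum_mul, hγ, one_mul]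

theorem mul_nsq_le_nsq_conv_gwavelet (hπ : IsCompleteIrrepSystem d π) {c : Fin k → ℂ} {β : ℝ}
    (hβ : ∀ r, β ≤ Complex.normSq (c r)) (h : G → ℂ) :
    β * nsq h ≤ nsq (conv (gwavelet d π c) h) := by
  simp only [hπ.nsq_eq_sum_groupFourierNormSq, hπ.groupFourierNormSq_conv_gwavelet,
    Finset.mul_sum]
  refine Finset.sum_le_sum fun r _ => ?_
  have : 0 ≤ groupFourierNormSq π h r :=
    Finset.sum_nonneg fun _ _ => Finset.sum_nonneg fun _ _ => Complex.normSq_nonneg _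
  rw [mul_left_comm]
  gcongr
  exact hβ r

end IsCompleteIrrepSystem

theorem sum_ofFn_succ {J : ℕ} {M : Type*} [AddCommMonoid M] (m : ℕ) (F : List (Fin J) → M) :
    ∑ q : Fin (m + 1) → Fin J, F (List.ofFn q)
      = ∑ p : Fin m → Fin J, ∑ j, F (List.ofFn p ++ [j]) := by
  rw [← (Fin.snocEquiv fun _ => Fin J).sum_comp, Fintype.sum_prod_type, Finset.sum_comm]
  refine Finset.sum_congr rfl fun p _ => Finset.sum_congr rfl fun j _ => ?_
  simp only [Fin.snocEquiv, Equiv.coe_fn_mk]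
  rw [List.ofFn_succ']
  simp

section Scattering

variable {G : Type*} [Group G] [Fintype G]

theorem nsq_nonneg (h : G → ℂ) : 0 ≤ nsq h :=
  mul_nonneg (by positivity) (Finset.sum_nonneg fun x _ => Complex.normSq_nonneg _)

theorem nsq_eq_zero_iff {h : G → ℂ} : nsq h = 0 ↔ h = 0 := by
  have hN : (Fintype.card G : ℝ)⁻¹ ≠ 0 := by positivity
  rw [nsq, mul_eq_zero, or_iff_right hN,
    Fintype.sum_eq_zero_iff_of_nonneg fun x => Complex.normSq_nonneg _]
  simp [funext_iff]

theorem conv_sub (K g g' : G → ℂ) : conv K (g - g') = conv K g - conv K g' := by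
  ext x
  simp [conv, mul_sub, Finset.sum_sub_distrib]

theorem nsq_norm_sub_norm_le (u v : G → ℂ) :
    nsq (fun x => ((‖u x‖ : ℝ) : ℂ) - ((‖v x‖ : ℝ) : ℂ)) ≤ nsq (u - v) := by
  refine mul_le_mul_of_nonneg_left (Finset.sum_le_sum fun x _ => ?_) (by positivity)
  simp only [Pi.sub_apply]
  rw [← Complex.ofReal_sub, Complex.normSq_ofReal, Complex.normSq_eq_norm_sq, sq,
    ← abs_mul_abs_self]
  exact mul_self_le_mul_self (abs_nonneg _) (abs_norm_sub_norm_le _ _)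

variable {J : ℕ} (φ : G → ℂ) (ψ : Fin J → G → ℂ)

theorem upath_append_singleton (p : List (Fin J)) (j : Fin J) (f : G → ℂ) :
    Upath ψ (p ++ [j]) f = fun x => ((‖conv (ψ j) (Upath ψ p f) x‖ : ℝ) : ℂ) := by
  induction p generalizing f with
  | nil => rfl
  | cons i p ih => exact ih _

noncomputable def pathEnergy (m : ℕ) (f f' : G → ℂ) : ℝ :=
  ∑ p : Fin m → Fin J, nsq (Upath ψ (List.ofFn p) f - Upath ψ (List.ofFn p) f')

noncomputable def scatteringEnergy (m : ℕ) (f f' : G → ℂ) : ℝ :=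
  ∑ p : Fin m → Fin J, nsq (conv φ (Upath ψ (List.ofFn p) f) - conv φ (Upath ψ (List.ofFn p) f'))

variable {φ ψ}

theorem nsq_conv_sub_add_sum_nsq_norm_sub_le
    (hframe : ∀ h, nsq (conv φ h) + ∑ j, nsq (conv (ψ j) h) ≤ nsq h) (g g' : G → ℂ) :
    nsq (conv φ g - conv φ g')
        + ∑ j, nsq (fun x => ((‖conv (ψ j) g x‖ : ℝ) : ℂ) - ((‖conv (ψ j) g' x‖ : ℝ) : ℂ))
      ≤ nsq (g - g') := by
  calc _ ≤ nsq (conv φ (g - g')) + ∑ j, nsq (conv (ψ j) (g - g')) := by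
        rw [conv_sub]
        gcongr with j
        rw [conv_sub]
        exact nsq_norm_sub_norm_le _ _
    _ ≤ nsq (g - g') := hframe _

theorem scatteringEnergy_add_pathEnergy_succ_le
    (hframe : ∀ h, nsq (conv φ h) + ∑ j, nsq (conv (ψ j) h) ≤ nsq h) (m : ℕ) (f f' : G → ℂ) :
    scatteringEnergy φ ψ m f f' + pathEnergy ψ (m + 1) f f' ≤ pathEnergy ψ m f f' := by
  rw [scatteringEnergy, pathEnergy, pathEnergy,
    sum_ofFn_succ m fun q => nsq (Upath ψ q f - Upath ψ q f'), ← Finset.sum_add_distrib]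
  refine Finset.sum_le_sum fun p _ => ?_
  simp only [upath_append_singleton]
  exact nsq_conv_sub_add_sum_nsq_norm_sub_le hframe _ _

theorem sum_range_scatteringEnergy_add_pathEnergy_le
    (hframe : ∀ h, nsq (conv φ h) + ∑ j, nsq (conv (ψ j) h) ≤ nsq h) (M : ℕ) (f f' : G → ℂ) :
    ∑ m ∈ Finset.range M, scatteringEnergy φ ψ m f f' + pathEnergy ψ M f f' ≤ nsq (f - f') := by
  induction M with
  | zero => simp [pathEnergy, Upath]
  | succ M ih =>
    have := scatteringEnergy_add_pathEnergy_succ_le hframe M f f'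
    rw [Finset.sum_range_succ]
    linarith

theorem nsq_conv_sub_le_tsum_scatteringEnergy
    (hframe : ∀ h, nsq (conv φ h) + ∑ j, nsq (conv (ψ j) h) ≤ nsq h) (f f' : G → ℂ) :
    nsq (conv φ f - conv φ f') ≤ ∑' m, scatteringEnergy φ ψ m f f' := by
  have hnonneg : ∀ m, 0 ≤ scatteringEnergy φ ψ m f f' := fun m =>
    Finset.sum_nonneg fun _ _ => nsq_nonneg _
  have hsummable : Summable fun m => scatteringEnergy φ ψ m f f' :=
    summable_of_sum_range_le hnonneg fun M => by
      have := sum_range_scatteringEnergy_add_pathEnergy_le hframe M f f'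
      have : 0 ≤ pathEnergy ψ M f f' := Finset.sum_nonneg fun _ _ => nsq_nonneg _
      linarith
  calc nsq (conv φ f - conv φ f') = scatteringEnergy φ ψ 0 f f' := by
        simp [scatteringEnergy, Upath]
    _ ≤ _ := hsummable.le_tsum 0 fun m _ => hnonneg m

end Scattering

theorem stmt12 {G : Type*} [Group G] [Fintype G]
    {k : ℕ} (d : Fin k → ℕ) (hdpos : ∀ r, 0 < d r)
    (π : (r : Fin k) → G →* Matrix (Fin (d r)) (Fin (d r)) ℂ)
    (hunit : ∀ r x, π r x ∈ Matrix.unitaryGroup (Fin (d r)) ℂ)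
    (hirr : ∀ (r : Fin k) (M : Matrix (Fin (d r)) (Fin (d r)) ℂ),
      (∀ x, M * π r x = π r x * M) → ∃ c : ℂ, M = c • (1 : Matrix (Fin (d r)) (Fin (d r)) ℂ))
    (hneq : ∀ (r s : Fin k), r ≠ s → ∀ T : Matrix (Fin (d r)) (Fin (d s)) ℂ,
      (∀ x, π r x * T = T * π s x) → T = 0)
    (hcard : Nat.card (ConjClasses G) = k)
    {J : ℕ} (γ : Fin (J + 1) → Fin k → ℂ)
    (hPar : ∀ r : Fin k, ∑ j : Fin (J + 1), Complex.normSq (γ j r) = 1)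
    (β : ℝ) (hβpos : 0 < β) (hβ : ∀ r : Fin k, β ≤ Complex.normSq (γ 0 r))
    (f f' : G → ℂ) :
    (∑' m : ℕ, ∑ p : Fin m → Fin J,
        nsq (fun x => Sop d π γ (List.ofFn p) f x - Sop d π γ (List.ofFn p) f' x)
      ≥ nsq (conv (gwavelet d π (γ 0)) (fun x => f x - f' x))) ∧
    nsq (conv (gwavelet d π (γ 0)) (fun x => f x - f' x))
      ≥ β * nsq (fun x => f x - f' x) ∧
    ((∀ (m : ℕ) (p : Fin m → Fin J),
        Sop d π γ (List.ofFn p) f = Sop d π γ (List.ofFn p) f') → f = f') := by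
  have hπ : IsCompleteIrrepSystem d π := ⟨hdpos, hunit, hirr, hneq, hcard⟩
  have hframe (h : G → ℂ) : nsq (conv (gwavelet d π (γ 0)) h)
      + ∑ j : Fin J, nsq (conv (gwavelet d π (γ j.succ)) h) ≤ nsq h := by
    rw [← hπ.sum_nsq_conv_gwavelet γ hPar h, Fin.sum_univ_succ]
  have hlower : β * nsq (f - f') ≤ nsq (conv (gwavelet d π (γ 0)) (f - f')) :=
    hπ.mul_nsq_le_nsq_conv_gwavelet hβ _
  refine ⟨?_, hlower, fun hS => ?_⟩
  · rw [ge_iff_le, show (fun x => f x - f' x) = f - f' from rfl, conv_sub]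
    exact nsq_conv_sub_le_tsum_scatteringEnergy hframe f f'
  · have hφ : conv (gwavelet d π (γ 0)) f = conv (gwavelet d π (γ 0)) f' := hS 0 Fin.elim0
    rw [conv_sub, hφ, sub_self, nsq_eq_zero_iff.mpr rfl] at hlower
    have := nsq_nonneg (f - f')
    exact sub_eq_zero.mp (nsq_eq_zero_iff.mp (by nlinarith))
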